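/- For $S > 1/2$ and $\beta < 1/2$, the trilinear operator $R_3(u,v,w)_k = \sum_{k_1+k_2+k_3=k} \frac{e^{i3(k_1+k_2)(k_2+k_3)(k_3+k_1)t}}{k_1} u_{k_1}v_{k_2}w_{k_3}$ satisfies $\|R_3(u,v,w)\|_{\dot H^{-S}} \leq c_6'(S,\beta)\|u\|_{\dot H^{-\beta}}\|v\|_{\dot H^0}\|w\|_{\dot H^0}$ for a finite constant $c_6'(S,\beta)$. -/

import Mathlib

open Complex

noncomputable def hnorm (s : ℝ) (u : ℤ → ℂ) : ℝ :=
  (∑' k : ℤ, |(k : ℝ)| ^ (2 * s) * ‖u k‖ ^ 2) ^ ((1 : ℝ) / 2)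

noncomputable def R3 (t : ℝ) (u v w : ℤ → ℂ) (k : ℤ) : ℂ :=
  ∑' p : ℤ × ℤ,
    Complex.exp (Complex.I *
        (3 * ((p.1 : ℂ) + (p.2 : ℂ)) * ((p.2 : ℂ) + ((k : ℂ) - (p.1 : ℂ) - (p.2 : ℂ))) *
          (((k : ℂ) - (p.1 : ℂ) - (p.2 : ℂ)) + (p.1 : ℂ)) * (t : ℂ)))
      / (p.1 : ℂ) * u p.1 * v p.2 * w (k - p.1 - p.2)

/-!
The phase of each summand of `R3` has modulus one, so
`|R3(u,v,w)_k| ≤ ∑_{k₁} |u_{k₁}/k₁| ∑_{k₂} |v_{k₂}| |w_{k-k₁-k₂}|`.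
The inner sum is at most `‖v‖_{ℓ²} ‖w‖_{ℓ²}` by Cauchy–Schwarz, and the outer one is at most
`(∑ |k|^{2β-2})^{1/2} ‖u‖_{Ḣ^{-β}}`, finite as `β < 1/2`. Hence `R3(u,v,w)` is bounded uniformly
in `k`, and a bounded sequence lies in `Ḣ^{-S}` with norm at most `(∑ |k|^{-2S})^{1/2}` times
the bound, finite as `S > 1/2`.
-/

def MemHdot (s : ℝ) (u : ℤ → ℂ) : Prop :=
  Summable fun k : ℤ => |(k : ℝ)| ^ (2 * s) * ‖u k‖ ^ 2

theorem hnorm_nonneg (s : ℝ) (u : ℤ → ℂ) : 0 ≤ hnorm s u :=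
  Real.rpow_nonneg (tsum_nonneg fun _ => by positivity) _

theorem hnorm_eq_sqrt (s : ℝ) (u : ℤ → ℂ) :
    hnorm s u = √(∑' k : ℤ, |(k : ℝ)| ^ (2 * s) * ‖u k‖ ^ 2) := by
  rw [hnorm, Real.sqrt_eq_rpow]

theorem memHdot_zero_iff {u : ℤ → ℂ} : MemHdot 0 u ↔ Summable fun k : ℤ => ‖u k‖ ^ 2 := by
  simp [MemHdot]

/-- `hnorm (-s) 1 = (∑_{k ≠ 0} |k|^{-2s})^{1/2}` is the constant of the `ℓ¹`-bound
`∑ |z k| ≤ ‖1‖_{Ḣ^{-s}} ‖z‖_{Ḣ^s}`. -/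
theorem memHdot_one {s : ℝ} (hs : 1 / 2 < s) : MemHdot (-s) 1 := by
  refine (Real.summable_abs_int_rpow (b := 2 * s) (by linarith)).congr fun k => ?_
  simp only [Pi.one_apply, norm_one, one_pow, mul_one, mul_neg]

theorem memHdot_zero_comp_sub {w : ℤ → ℂ} (hw : MemHdot 0 w) (n : ℤ) :
    MemHdot 0 fun j => w (n - j) := by
  rw [memHdot_zero_iff] at *
  exact (Equiv.subLeft n).summable_iff.mpr hw

theorem hnorm_zero_comp_sub (w : ℤ → ℂ) (n : ℤ) : hnorm 0 (fun j => w (n - j)) = hnorm 0 w := by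
  simp only [hnorm, mul_zero, Real.rpow_zero, one_mul]
  exact congrArg (· ^ _) ((Equiv.subLeft n).tsum_eq fun j => ‖w j‖ ^ 2)

/-- Cauchy–Schwarz for the pairing of `Ḣˢ` and `Ḣ⁻ˢ`. Since `|0| ^ r = 0` for `r ≠ 0`, the norms
do not see the `k = 0` entry, whence `x 0 = 0`. -/
theorem summable_and_tsum_le_hnorm_mul_hnorm {s : ℝ} {x y : ℤ → ℂ} (hx0 : x 0 = 0)
    (hx : MemHdot s x) (hy : MemHdot (-s) y) :
    (Summable fun k => ‖x k‖ * ‖y k‖) ∧ ∑' k, ‖x k‖ * ‖y k‖ ≤ hnorm s x * hnorm (-s) y := by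
  have hsplit : ∀ k : ℤ, ‖x k‖ * ‖y k‖
      = (|(k : ℝ)| ^ s * ‖x k‖) * (|(k : ℝ)| ^ (-s) * ‖y k‖) := by
    intro k
    rcases eq_or_ne k 0 with rfl | hk
    · simp [hx0]
    · have hk' : (0 : ℝ) < |(k : ℝ)| := by positivity
      rw [Real.rpow_neg hk'.le]
      field_simp
  have hsq : ∀ (r : ℝ) (k : ℤ) (z : ℂ),
      (|(k : ℝ)| ^ r * ‖z‖) ^ (2 : ℝ) = |(k : ℝ)| ^ (2 * r) * ‖z‖ ^ 2 := by
    intro r k z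
    rw [Real.rpow_two, mul_pow, mul_comm 2 r, Real.rpow_mul (abs_nonneg _), Real.rpow_two]
  have holder := Real.summable_and_inner_le_Lp_mul_Lq_tsum_of_nonneg Real.HolderConjugate.two_two
    (f := fun k : ℤ => |(k : ℝ)| ^ s * ‖x k‖) (g := fun k : ℤ => |(k : ℝ)| ^ (-s) * ‖y k‖)
    (fun _ => by positivity) (fun _ => by positivity)
    (by simp only [hsq]; exact hx) (by simp only [hsq]; exact hy)
  simp only [hsq] at holder
  simpa only [← hsplit, hnorm] using holder

theorem weight_mul_norm_div_intCast_sq (s : ℝ) {u : ℤ → ℂ} (hu0 : u 0 = 0) (k : ℤ) :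
    |(k : ℝ)| ^ (2 * (s + 1)) * ‖u k / k‖ ^ 2 = |(k : ℝ)| ^ (2 * s) * ‖u k‖ ^ 2 := by
  rcases eq_or_ne k 0 with rfl | hk
  · simp [hu0]
  · have hk' : (0 : ℝ) < |(k : ℝ)| := by positivity
    rw [show 2 * (s + 1) = 2 * s + 2 by ring, Real.rpow_add hk', Real.rpow_two, norm_div,
      Complex.norm_intCast]
    field_simp

theorem memHdot_div_intCast {s : ℝ} {u : ℤ → ℂ} (hu0 : u 0 = 0) (hu : MemHdot s u) :
    MemHdot (s + 1) fun k => u k / k := by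
  simpa only [MemHdot, weight_mul_norm_div_intCast_sq s hu0] using hu

theorem hnorm_div_intCast (s : ℝ) {u : ℤ → ℂ} (hu0 : u 0 = 0) :
    hnorm (s + 1) (fun k => u k / k) = hnorm s u := by
  simp only [hnorm, weight_mul_norm_div_intCast_sq s hu0]

theorem summable_and_tsum_norm_div_intCast_le {β : ℝ} (hβ : β < 1 / 2) {u : ℤ → ℂ}
    (hu0 : u 0 = 0) (hu : MemHdot (-β) u) :
    (Summable fun k => ‖u k / k‖) ∧ ∑' k, ‖u k / k‖ ≤ hnorm (β - 1) 1 * hnorm (-β) u := by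
  have hcs := summable_and_tsum_le_hnorm_mul_hnorm (by simp) (memHdot_div_intCast hu0 hu)
    (memHdot_one (s := -β + 1) (by linarith))
  simp only [Pi.one_apply, norm_one, mul_one, hnorm_div_intCast _ hu0,
    show -(-β + 1) = β - 1 by ring] at hcs
  rw [mul_comm]
  exact hcs

theorem summable_and_tsum_prod_le {a : ℤ → ℝ} {b : ℤ → ℤ → ℝ} {M : ℝ} (ha0 : ∀ i, 0 ≤ a i)
    (hb0 : ∀ i j, 0 ≤ b i j) (ha : Summable a) (hb : ∀ i, Summable (b i))
    (hbM : ∀ i, ∑' j, b i j ≤ M) :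
    (Summable fun p : ℤ × ℤ => a p.1 * b p.1 p.2) ∧
      ∑' p : ℤ × ℤ, a p.1 * b p.1 p.2 ≤ (∑' i, a i) * M := by
  have hrow : ∀ i, ∑' j, a i * b i j ≤ a i * M := fun i => by
    rw [tsum_mul_left]
    exact mul_le_mul_of_nonneg_left (hbM i) (ha0 i)
  have hM : Summable fun i => a i * M := ha.mul_right M
  have hsum : Summable fun p : ℤ × ℤ => a p.1 * b p.1 p.2 := by
    refine (summable_prod_of_nonneg fun p => mul_nonneg (ha0 _) (hb0 _ _)).mpr
      ⟨fun i => (hb i).mul_left (a i), hM.of_nonneg_of_le (fun i => ?_) hrow⟩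
    exact tsum_nonneg fun j => mul_nonneg (ha0 i) (hb0 i j)
  refine ⟨hsum, ?_⟩
  rw [hsum.tsum_prod' fun i => (hb i).mul_left (a i), ← tsum_mul_right]
  exact hsum.prod.tsum_le_tsum hrow hM

theorem summable_and_tsum_norm_mul_norm_sub_le {v w : ℤ → ℂ} (hv0 : v 0 = 0) (hv : MemHdot 0 v)
    (hw : MemHdot 0 w) (n : ℤ) :
    (Summable fun j => ‖v j‖ * ‖w (n - j)‖) ∧
      ∑' j, ‖v j‖ * ‖w (n - j)‖ ≤ hnorm 0 v * hnorm 0 w := by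
  have hcs := summable_and_tsum_le_hnorm_mul_hnorm hv0 hv
    (by rw [neg_zero]; exact memHdot_zero_comp_sub hw n)
  rwa [neg_zero, hnorm_zero_comp_sub] at hcs

theorem norm_tsum_le_of_norm_le_convolution {F : ℤ × ℤ → ℂ} {a : ℤ → ℝ} {v w : ℤ → ℂ} {n : ℤ}
    (ha0 : ∀ i, 0 ≤ a i) (ha : Summable a) (hv0 : v 0 = 0) (hv : MemHdot 0 v)
    (hw : MemHdot 0 w) (hF : ∀ p : ℤ × ℤ, ‖F p‖ ≤ a p.1 * (‖v p.2‖ * ‖w (n - p.1 - p.2)‖)) :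
    ‖∑' p, F p‖ ≤ (∑' i, a i) * (hnorm 0 v * hnorm 0 w) := by
  have hconv (i : ℤ) := summable_and_tsum_norm_mul_norm_sub_le hv0 hv hw (n - i)
  obtain ⟨hT, hTle⟩ := summable_and_tsum_prod_le ha0 (fun _ _ => by positivity) ha
    (fun i => (hconv i).1) (fun i => (hconv i).2)
  have hFsum : Summable fun p => ‖F p‖ := hT.of_nonneg_of_le (fun _ => norm_nonneg _) hF
  calc ‖∑' p, F p‖ ≤ ∑' p, ‖F p‖ := norm_tsum_le_tsum_norm hFsum
    _ ≤ _ := hFsum.tsum_le_tsum hF hT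
    _ ≤ _ := hTle

theorem norm_R3_summand_eq (t : ℝ) (u v w : ℤ → ℂ) (k : ℤ) (p : ℤ × ℤ) :
    ‖Complex.exp (Complex.I *
        (3 * ((p.1 : ℂ) + (p.2 : ℂ)) * ((p.2 : ℂ) + ((k : ℂ) - (p.1 : ℂ) - (p.2 : ℂ))) *
          (((k : ℂ) - (p.1 : ℂ) - (p.2 : ℂ)) + (p.1 : ℂ)) * (t : ℂ)))
      / (p.1 : ℂ) * u p.1 * v p.2 * w (k - p.1 - p.2)‖
      = ‖u p.1 / p.1‖ * (‖v p.2‖ * ‖w (k - p.1 - p.2)‖) := by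
  have hphase := Complex.norm_exp_I_mul_ofReal
    (3 * ((p.1 : ℝ) + p.2) * (p.2 + (k - p.1 - p.2)) * ((k - p.1 - p.2) + p.1) * t)
  push_cast at hphase
  rw [norm_mul, norm_mul, norm_mul, norm_div, hphase, norm_div]
  ring

theorem norm_R3_le {u v w : ℤ → ℂ} (hv0 : v 0 = 0) (hu : Summable fun j => ‖u j / j‖)
    (hv : MemHdot 0 v) (hw : MemHdot 0 w) (t : ℝ) (k : ℤ) :
    ‖R3 t u v w k‖ ≤ (∑' j, ‖u j / j‖) * (hnorm 0 v * hnorm 0 w) :=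
  norm_tsum_le_of_norm_le_convolution (fun _ => norm_nonneg _) hu hv0 hv hw
    fun p => (norm_R3_summand_eq t u v w k p).le

theorem hnorm_neg_le_of_norm_le {s M : ℝ} (hs : 1 / 2 < s) {f : ℤ → ℂ} (hf : ∀ k, ‖f k‖ ≤ M) :
    hnorm (-s) f ≤ hnorm (-s) 1 * M := by
  have hM : 0 ≤ M := (norm_nonneg _).trans (hf 0)
  have hle : ∀ k : ℤ, |(k : ℝ)| ^ (2 * -s) * ‖f k‖ ^ 2
      ≤ |(k : ℝ)| ^ (2 * -s) * ‖(1 : ℤ → ℂ) k‖ ^ 2 * M ^ 2 := fun k => by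
    simp only [Pi.one_apply, norm_one, one_pow, mul_one]
    gcongr
    exact hf k
  have hone : MemHdot (-s) 1 := memHdot_one hs
  rw [hnorm_eq_sqrt, hnorm_eq_sqrt, ← Real.sqrt_sq hM,
    ← Real.sqrt_mul (tsum_nonneg fun _ => by positivity), ← tsum_mul_right]
  exact Real.sqrt_le_sqrt <| (hone.mul_right _).of_nonneg_of_le (fun _ => by positivity) hle
    |>.tsum_le_tsum hle (hone.mul_right _)

theorem R3_neg_bound (S β : ℝ) (hS : 1 / 2 < S) (hβ : β < 1 / 2) :
    ∃ C : ℝ, ∀ (t : ℝ) (u v w : ℤ → ℂ), u 0 = 0 → v 0 = 0 → w 0 = 0 →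
      (Summable fun k : ℤ => |(k : ℝ)| ^ (2 * (-β)) * ‖u k‖ ^ 2) →
      (Summable fun k : ℤ => ‖v k‖ ^ 2) →
      (Summable fun k : ℤ => ‖w k‖ ^ 2) →
      hnorm (-S) (R3 t u v w) ≤ C * hnorm (-β) u * hnorm 0 v * hnorm 0 w := by
  refine ⟨hnorm (-S) 1 * hnorm (β - 1) 1, fun t u v w hu0 hv0 _ hu hv hw => ?_⟩
  obtain ⟨hu1, hu1_le⟩ := summable_and_tsum_norm_div_intCast_le hβ hu0 hu
  have hvw : 0 ≤ hnorm 0 v * hnorm 0 w := mul_nonneg (hnorm_nonneg 0 v) (hnorm_nonneg 0 w)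
  calc hnorm (-S) (R3 t u v w)
      ≤ hnorm (-S) 1 * ((∑' j, ‖u j / j‖) * (hnorm 0 v * hnorm 0 w)) :=
        hnorm_neg_le_of_norm_le hS
          (norm_R3_le hv0 hu1 (memHdot_zero_iff.mpr hv) (memHdot_zero_iff.mpr hw) t)
    _ ≤ hnorm (-S) 1 * ((hnorm (β - 1) 1 * hnorm (-β) u) * (hnorm 0 v * hnorm 0 w)) := by
        gcongr
        exact hnorm_nonneg _ _
    _ = _ := by ring
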